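/- arXiv:1607.06955 — 6 statements merged into one kernel-verified Lean document; each statement's English description precedes it below -/
import Mathlib

section
/- Let 𝔤 be a finite-dimensional Lie algebra over a field k of characteristic zero such that 𝔤 is not isomorphic to a semidirect product 𝔤' ⋉ k·x for any 1-dimensional Lie ideal k·x ⊆ 𝔤. Then every finite subgroup G of the group of Lie algebra automorphisms of 𝔤 contains no pseudo-reflection other than the identity. -/
/-!
A bracket-preserving pseudo-reflection `g` would split `L` as a semidirect product. Let
`V = ker (g - 1)` be its fixed points and `I = range (g - 1)`. Since `g` has finite order and
`char k = 0`, `V ∩ I = 0`: if `v = g w - w` is fixed, then `g^i w = w + i • v`, and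
`i = orderOf g` forces `v = 0`. Hence `L = V ⊕ I` with `I` a line. The fixed points `V` form a
subalgebra, and for `x ∈ V` we have `⁅x, g y - y⁆ = g ⁅x, y⁆ - ⁅x, y⁆`, so `⁅V, I⁆ ⊆ I`; as a
line, `I` is abelian, so it is an ideal and `L = V ⋉ I`.
-/

open Module

/-- A pseudo-reflection of a finite-dimensional vector space: a linear automorphism of
finite order whose fixed subspace has codimension 1. -/
def IsPseudoReflection {k L : Type*} [Field k] [AddCommGroup L] [Module k L]
    (g : L ≃ₗ[k] L) : Prop :=
  IsOfFinOrder g ∧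
    finrank k (LinearMap.ker ((g : L →ₗ[k] L) - LinearMap.id)) + 1 = finrank k L

open LinearMap

namespace Module.End

theorem disjoint_ker_sub_one_range_sub_one {R M : Type*} [Ring R] [AddCommGroup M] [Module R M]
    [IsAddTorsionFree M] {f : Module.End R M} (hf : IsOfFinOrder f) :
    Disjoint (ker (f - 1)) (range (f - 1)) := by
  refine Submodule.disjoint_def.mpr fun v hv ⟨w, hw⟩ => ?_
  have hfv : f v = v := sub_eq_zero.mp hv
  have hfw : f w = w + v := by rw [← hw, LinearMap.sub_apply, one_apply, add_sub_cancel]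
  have hpow : ∀ i : ℕ, (f ^ i) w = w + i • v := by
    intro i
    induction i with
    | zero => simp
    | succ i ih => rw [pow_succ', mul_apply, ih, map_add, map_nsmul, hfw, hfv, succ_nsmul,
        add_assoc, add_comm v]
  have hnv : orderOf f • v = 0 := by
    simpa [pow_orderOf_eq_one] using hpow (orderOf f)
  exact (nsmul_eq_zero_iff.mp hnv).resolve_right hf.orderOf_pos.ne'

theorem isCompl_ker_sub_one_range_sub_one {K V : Type*} [DivisionRing K] [CharZero K]
    [AddCommGroup V] [Module K V] [FiniteDimensional K V] {f : Module.End K V}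
    (hf : IsOfFinOrder f) : IsCompl (ker (f - 1)) (range (f - 1)) := by
  have := IsAddTorsionFree.of_isTorsionFree K V
  refine (Submodule.isCompl_iff_disjoint _ _ ?_).mpr (disjoint_ker_sub_one_range_sub_one hf)
  rw [add_comm, (f - 1).finrank_range_add_finrank_ker]

end Module.End

namespace LieHom

variable {R L : Type*} [CommRing R] [LieRing L] [LieAlgebra R L] (f : L →ₗ⁅R⁆ L)

def fixedSubalgebra : LieSubalgebra R L where
  toSubmodule := LinearMap.ker ((f : Module.End R L) - 1)
  lie_mem' {x y} hx hy := by
    have hfx : f x = x := sub_eq_zero.mp hx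
    have hfy : f y = y := sub_eq_zero.mp hy
    change f ⁅x, y⁆ - ⁅x, y⁆ = 0
    rw [map_lie, hfx, hfy, sub_self]

theorem lie_sub_one_apply {x : L} (hx : x ∈ f.fixedSubalgebra) (y : L) :
    ⁅x, ((f : Module.End R L) - 1) y⁆ = ((f : Module.End R L) - 1) ⁅x, y⁆ := by
  have hfx : f x = x := sub_eq_zero.mp hx
  simp only [LinearMap.sub_apply, Module.End.one_apply, coe_toLinearMap, map_lie, hfx, lie_sub]

end LieHom

section

variable {K L : Type*} [Field K] [LieRing L] [LieAlgebra K L]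

theorem lie_eq_zero_of_finrank_eq_one {I : Submodule K L} (hI : finrank K I = 1) {x y : L}
    (hx : x ∈ I) (hy : y ∈ I) : ⁅x, y⁆ = 0 := by
  obtain rfl | hx0 := eq_or_ne x 0
  · exact zero_lie y
  obtain ⟨c, hc⟩ :=
    (finrank_eq_one_iff_of_nonzero' (⟨x, hx⟩ : I) (by simpa using hx0)).mp hI ⟨y, hy⟩
  rw [← show c • x = y from congrArg Subtype.val hc, lie_smul, lie_self, smul_zero]

def LieIdeal.ofCodisjoint (V : LieSubalgebra K L) (I : Submodule K L)
    (hVI : Codisjoint V.toSubmodule I) (hV : ∀ x ∈ V, ∀ y ∈ I, ⁅x, y⁆ ∈ I)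
    (hI : ∀ x ∈ I, ∀ y ∈ I, ⁅x, y⁆ ∈ I) : LieIdeal K L where
  toSubmodule := I
  lie_mem {z y} hy := by
    obtain ⟨a, ha, b, hb, rfl⟩ := Submodule.mem_sup.mp (hVI.eq_top ▸ Submodule.mem_top (x := z))
    rw [add_lie]
    exact I.add_mem (hV a ha y hy) (hI b hb y hy)

end

theorem LieHom.exists_isCompl_lieIdeal_of_codim_fixedSubalgebra_eq_one {K L : Type*} [Field K]
    [CharZero K] [LieRing L] [LieAlgebra K L] [FiniteDimensional K L] (f : L →ₗ⁅K⁆ L)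
    (hf : IsOfFinOrder (f : Module.End K L))
    (hdim : finrank K f.fixedSubalgebra + 1 = finrank K L) :
    ∃ (V : LieSubalgebra K L) (I : LieIdeal K L),
      finrank K I = 1 ∧ IsCompl V.toSubmodule I.toSubmodule := by
  set I := LinearMap.range ((f : Module.End K L) - 1)
  have hcompl : IsCompl f.fixedSubalgebra.toSubmodule I :=
    Module.End.isCompl_ker_sub_one_range_sub_one hf
  have hI : finrank K I = 1 := Nat.add_right_cancel <|
    ((f : Module.End K L) - 1).finrank_range_add_finrank_ker.trans (hdim.symm.trans (add_comm _ _))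
  have hV : ∀ x ∈ f.fixedSubalgebra, ∀ y ∈ I, ⁅x, y⁆ ∈ I := by
    rintro x hx _ ⟨y, rfl⟩
    exact f.lie_sub_one_apply hx y ▸ LinearMap.mem_range_self _ _
  exact ⟨_, .ofCodisjoint _ I hcompl.codisjoint hV
    fun x hx y hy ↦ (lie_eq_zero_of_finrank_eq_one hI hx hy).symm ▸ I.zero_mem, hI, hcompl⟩

theorem no_pseudoReflection_of_no_semidirect_decomposition_general
    {k L : Type*} [Field k] [CharZero k] [LieRing L] [LieAlgebra k L]
    [FiniteDimensional k L]
    (hno : ¬ ∃ (V : LieSubalgebra k L) (I : LieIdeal k L),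
        finrank k I = 1 ∧ IsCompl V.toSubmodule I.toSubmodule)
    (G : Subgroup (L ≃ₗ[k] L))
    (hLie : ∀ g ∈ G, ∀ x y : L, g ⁅x, y⁆ = ⁅g x, g y⁆) :
    ∀ g ∈ G, IsPseudoReflection g → g = 1 := by
  rintro g hg ⟨hfin, hdim⟩
  let f : L →ₗ⁅k⁆ L := { (g : L →ₗ[k] L) with map_lie' := hLie g hg _ _ }
  exact (hno (f.exists_isCompl_lieIdeal_of_codim_fixedSubalgebra_eq_one
    (LinearEquiv.automorphismGroup.toLinearMapMonoidHom.isOfFinOrder hfin) hdim)).elim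

/-- If a finite-dimensional Lie algebra `L` over a field of characteristic zero admits no
decomposition `L = V ⋉ k·x` with `V` a Lie subalgebra and `k·x` a one-dimensional Lie ideal,
then every finite subgroup of the group of Lie algebra automorphisms of `L` contains no
pseudo-reflection other than the identity. -/
theorem no_pseudoReflection_of_no_semidirect_decomposition
    {k L : Type*} [Field k] [CharZero k] [LieRing L] [LieAlgebra k L]
    [FiniteDimensional k L]
    (hno : ¬ ∃ (V : LieSubalgebra k L) (I : LieIdeal k L),
        finrank k I = 1 ∧ IsCompl V.toSubmodule I.toSubmodule)
    (G : Subgroup (L ≃ₗ[k] L)) (hGfin : Finite G)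
    (hLie : ∀ g ∈ G, ∀ x y : L, g ⁅x, y⁆ = ⁅g x, g y⁆) :
    ∀ g ∈ G, IsPseudoReflection g → g = 1 :=
  no_pseudoReflection_of_no_semidirect_decomposition_general hno G hLie
end

section
/- Let g be a pseudo-reflection of finite order of a finite-dimensional Lie algebra 𝔤 over a field of characteristic zero that is also a Lie algebra automorphism. Then 𝔤 decomposes as V ⊕ k·x where V = ker(g − id) is a Lie subalgebra of 𝔤, k·x is a 1-dimensional Lie ideal of 𝔤, and g(x) = a·x for some scalar a ≠ 1. -/
/-!
Put `f = g - id`. Its kernel is the fixed subspace, so `f` has rank one and its range is a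
`g`-stable line `k ∙ x`; hence `g x = a • x`. If `a = 1` then `f * f = 0`, so
`g ^ n = 1 + n • f`, and finite order in characteristic zero forces `f = 0`. For `a ≠ 1`, `f`
acts on `k ∙ x` by the nonzero scalar `a - 1`, which splits `L = ker f ⊕ k ∙ x`. Finally
`f ⁅y, x⁆ = a • ⁅f y, x⁆ + (a - 1) • ⁅y, x⁆` and `⁅f y, x⁆ = 0` because `f y ∈ k ∙ x`, so
`⁅y, x⁆` is in the range of `f`, which is `k ∙ x`.
-/

open Module

theorem one_add_pow_of_mul_self_eq_zero {R : Type*} [Semiring R] {f : R} (hf : f * f = 0)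
    (n : ℕ) : (1 + f) ^ n = 1 + n * f := by
  induction n with
  | zero => simp
  | succ n ih =>
    rw [pow_succ, ih, Nat.cast_succ]
    calc (1 + n * f) * (1 + f) = 1 + (n + 1) * f + n * (f * f) := by noncomm_ring
      _ = 1 + (n + 1) * f := by rw [hf, mul_zero, add_zero]

theorem IsOfFinOrder.eq_one_of_sub_one_mul_self_eq_zero {K A : Type*} [Field K] [CharZero K]
    [Ring A] [Algebra K A] {u : A} (hu : IsOfFinOrder u) (h : (u - 1) * (u - 1) = 0) :
    u = 1 := by
  obtain ⟨n, hn, hun⟩ := hu.exists_pow_eq_one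
  have hnu : 1 + (n : A) * (u - 1) = 1 := by
    rw [← one_add_pow_of_mul_self_eq_zero h, add_sub_cancel, hun]
  rwa [add_eq_left, ← nsmul_eq_mul, ← Nat.cast_smul_eq_nsmul K,
    smul_eq_zero_iff_right (Nat.cast_ne_zero.mpr hn.ne'), sub_eq_zero] at hnu

namespace LinearMap

variable {K V : Type*} [Field K] [AddCommGroup V] [Module K V]

theorem mem_range_of_apply_eq_smul {f : V →ₗ[K] V} {v : V} {c : K} (hc : c ≠ 0)
    (h : f v = c • v) : v ∈ range f :=
  ⟨c⁻¹ • v, by rw [map_smul, h, inv_smul_smul₀ hc]⟩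

theorem isCompl_ker_span_singleton_of_apply_eq_smul {f : V →ₗ[K] V} {x : V} {c : K}
    (hc : c ≠ 0) (hx : f x = c • x) (hrange : range f ≤ Submodule.span K {x}) :
    IsCompl (ker f) (Submodule.span K {x}) := by
  have hspan : ∀ w ∈ Submodule.span K {x}, f w = c • w := by
    intro w hw
    obtain ⟨d, rfl⟩ := Submodule.mem_span_singleton.mp hw
    rw [map_smul, hx, smul_comm]
  constructor
  · rw [Submodule.disjoint_def]
    intro y hyker hyx
    rwa [mem_ker, hspan y hyx, smul_eq_zero_iff_right hc] at hyker
  · rw [codisjoint_iff, Submodule.eq_top_iff']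
    intro y
    have hfy : f y ∈ Submodule.span K {x} := hrange (mem_range_self f y)
    rw [← sub_add_cancel y (c⁻¹ • f y)]
    refine Submodule.add_mem_sup ?_ (Submodule.smul_mem _ _ hfy)
    rw [mem_ker, map_sub, map_smul, hspan _ hfy, inv_smul_smul₀ hc, sub_self]

theorem exists_range_eq_span_singleton_of_finrank_ker_add_one [FiniteDimensional K V]
    {f : V →ₗ[K] V} (h : finrank K (ker f) + 1 = finrank K V) :
    ∃ x ≠ 0, range f = Submodule.span K {x} := by
  have hrank : finrank K (range f) = 1 := by
    have := finrank_range_add_finrank_ker f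
    omega
  obtain ⟨x, hxf, hx⟩ := Submodule.exists_mem_ne_zero_of_ne_bot
    (Submodule.one_le_finrank_iff.mp hrank.ge)
  refine ⟨x, hx, (Submodule.eq_of_le_of_finrank_eq ?_ ?_).symm⟩
  · rwa [Submodule.span_singleton_le_iff_mem]
  · rw [finrank_span_singleton hx, hrank]

theorem exists_apply_eq_smul_of_range_sub_id_eq_span_singleton {e : V →ₗ[K] V} {x : V}
    (hrange : range (e - LinearMap.id) = Submodule.span K {x}) : ∃ a : K, e x = a • x := by
  obtain ⟨y, hy⟩ : x ∈ range (e - LinearMap.id) := hrange ▸ Submodule.mem_span_singleton_self x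
  have hex : e x ∈ range (e - LinearMap.id) := ⟨e y, by simp [← hy]⟩
  obtain ⟨a, ha⟩ := Submodule.mem_span_singleton.mp (hrange ▸ hex)
  exact ⟨a, ha.symm⟩

end LinearMap

theorem LinearEquiv.apply_ne_self_of_isOfFinOrder {K V : Type*} [Field K] [CharZero K]
    [AddCommGroup V] [Module K V] {e : V ≃ₗ[K] V} (he : IsOfFinOrder e) {x : V} (hx : x ≠ 0)
    (hrange : LinearMap.range ((e : V →ₗ[K] V) - LinearMap.id) = Submodule.span K {x}) :
    e x ≠ x := by
  intro hex
  have hrange_le :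
      LinearMap.range ((e : Module.End K V) - 1) ≤ LinearMap.ker ((e : Module.End K V) - 1) := by
    rw [Module.End.one_eq_id, hrange, Submodule.span_singleton_le_iff_mem, LinearMap.mem_ker]
    simp [hex]
  have he_fin : IsOfFinOrder (e : Module.End K V) :=
    LinearEquiv.automorphismGroup.toLinearMapMonoidHom.isOfFinOrder he
  have he_one : (e : Module.End K V) = 1 :=
    he_fin.eq_one_of_sub_one_mul_self_eq_zero (K := K) (LinearMap.range_le_ker_iff.mp hrange_le)
  rw [he_one, ← Module.End.one_eq_id, sub_self, LinearMap.range_zero, eq_comm,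
    Submodule.span_singleton_eq_bot] at hrange
  exact hx hrange

theorem LieEquiv.lie_mem_span_of_range_sub_id_eq_span_singleton {k L : Type*} [Field k]
    [LieRing L] [LieAlgebra k L] (g : L ≃ₗ⁅k⁆ L) {x : L} {a : k} (ha : a ≠ 1)
    (hgx : g x = a • x)
    (hrange : LinearMap.range ((g.toLinearEquiv : L →ₗ[k] L) - LinearMap.id) =
      Submodule.span k {x})
    (y : L) : ⁅y, x⁆ ∈ Submodule.span k {x} := by
  have hy : g y - y ∈ Submodule.span k {x} := hrange ▸ ⟨y, rfl⟩
  obtain ⟨c, hc⟩ := Submodule.mem_span_singleton.mp hy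
  have hgy : g y = y + c • x := by rw [hc, add_sub_cancel]
  rw [← hrange]
  refine LinearMap.mem_range_of_apply_eq_smul (sub_ne_zero.mpr ha) ?_
  calc ((g.toLinearEquiv : L →ₗ[k] L) - LinearMap.id : L →ₗ[k] L) ⁅y, x⁆
      = ⁅g y, g x⁆ - ⁅y, x⁆ := by simp [LieEquiv.map_lie]
    _ = (a - 1) • ⁅y, x⁆ := by
      rw [hgy, hgx, add_lie, smul_lie, lie_smul, lie_smul, lie_self, smul_zero, smul_zero,
        add_zero, sub_smul, one_smul]

/-- Let `g` be a Lie algebra automorphism of a finite-dimensional Lie algebra `L` over a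
field of characteristic zero which has finite order and is a pseudo-reflection (its fixed
subspace `V` has codimension 1).  Then `L = V ⊕ k·x` where `V = ker (g - id)` is a Lie
subalgebra, `k·x` is a one-dimensional Lie ideal, and `g x = a • x` for some `a ≠ 1`. -/
theorem lie_decomposition_of_pseudoReflection
    {k L : Type*} [Field k] [CharZero k] [LieRing L] [LieAlgebra k L]
    [FiniteDimensional k L]
    (g : L ≃ₗ⁅k⁆ L) (hfin : IsOfFinOrder g.toLinearEquiv)
    (hpr : finrank k
        (LinearMap.ker ((g.toLinearEquiv : L →ₗ[k] L) - LinearMap.id)) + 1 =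
      finrank k L) :
    ∃ (x : L) (a : k), x ≠ 0 ∧ a ≠ 1 ∧ g x = a • x ∧
      IsCompl (LinearMap.ker ((g.toLinearEquiv : L →ₗ[k] L) - LinearMap.id))
        (Submodule.span k {x}) ∧
      (∀ u ∈ LinearMap.ker ((g.toLinearEquiv : L →ₗ[k] L) - LinearMap.id),
        ∀ v ∈ LinearMap.ker ((g.toLinearEquiv : L →ₗ[k] L) - LinearMap.id),
          ⁅u, v⁆ ∈ LinearMap.ker ((g.toLinearEquiv : L →ₗ[k] L) - LinearMap.id)) ∧
      (∀ y : L, ⁅y, x⁆ ∈ Submodule.span k ({x} : Set L)) := by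
  obtain ⟨x, hx, hrange⟩ := LinearMap.exists_range_eq_span_singleton_of_finrank_ker_add_one hpr
  obtain ⟨a, hgx⟩ := LinearMap.exists_apply_eq_smul_of_range_sub_id_eq_span_singleton hrange
  have ha : a ≠ 1 := by
    rintro rfl
    exact LinearEquiv.apply_ne_self_of_isOfFinOrder hfin hx hrange (by simpa using hgx)
  refine ⟨x, a, hx, ha, hgx,
    LinearMap.isCompl_ker_span_singleton_of_apply_eq_smul (sub_ne_zero.mpr ha)
      (by simp [hgx, sub_smul]) hrange.le,
    fun u hu v hv => ?_, g.lie_mem_span_of_range_sub_id_eq_span_singleton ha hgx hrange⟩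
  simp only [LinearMap.mem_ker, LinearMap.sub_apply, LinearMap.id_apply, sub_eq_zero,
    LinearEquiv.coe_coe, LieEquiv.coe_toLinearEquiv] at hu hv ⊢
  rw [LieEquiv.map_lie, hu, hv]
end

section
/- Let V be a finite-dimensional vector space over an algebraically closed field of characteristic 0, and G ⊆ GL(V) a finite group acting on the commutative polynomial ring R = k[V]. If the natural map R∗G → End_{R^G}(R) is a ring isomorphism, then G is small, i.e., G contains no pseudo-reflection other than the identity. -/
/-
If `g ∈ G` is a pseudo-reflection, the linear forms `g xᵢ - xᵢ` all lie on one line `k ℓ`, so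
`ℓ` divides `g r - r` for every `r ∈ R` and `r ↦ (g r - r) / ℓ` is an `R^G`-linear endomorphism
of `R`. By surjectivity of the Auslander map it is the image of some `b ∈ R∗G`, and by injectivity
`ℓ b = g - 1` in `R∗G`. The coefficient of the basis vector `1` then gives `ℓ b₁ = -1`,
impossible as the linear form `ℓ` has no constant term.
-/

noncomputable section

open MvPolynomial Module

variable {k : Type*} [Field k] {n : ℕ}

def fixedSubmoduleOf (g : MvPolynomial (Fin n) k ≃ₐ[k] MvPolynomial (Fin n) k) :
    Submodule k (MvPolynomial (Fin n) k) where
  carrier := {r | g r = r}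
  add_mem' := fun hx hy => by simp only [Set.mem_setOf_eq] at *; rw [map_add, hx, hy]
  zero_mem' := by simp
  smul_mem' := fun c x hx => by simp only [Set.mem_setOf_eq] at *; rw [map_smul, hx]

/-- The invariant subring `R^G`, as a subalgebra. -/
def invariantSubalgebra (G : Subgroup (MvPolynomial (Fin n) k ≃ₐ[k] MvPolynomial (Fin n) k)) :
    Subalgebra k (MvPolynomial (Fin n) k) where
  carrier := {r | ∀ g ∈ G, g r = r}
  mul_mem' := fun ha hb g hg => by rw [map_mul, ha g hg, hb g hg]
  add_mem' := fun ha hb g hg => by rw [map_add, ha g hg, hb g hg]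
  algebraMap_mem' := fun c g _ => g.commutes c

theorem Submodule.exists_smul_eq_of_finrank_le_finrank_inf_ker_add_one {K V V' : Type*}
    [Field K] [AddCommGroup V] [Module K V] [AddCommGroup V'] [Module K V']
    (W : Submodule K V) [FiniteDimensional K W] (φ : V →ₗ[K] V')
    (h : finrank K W ≤ finrank K ↥(W ⊓ LinearMap.ker φ) + 1)
    {w₀ : V} (hw₀ : w₀ ∈ W) (hφw₀ : φ w₀ ≠ 0) {w : V} (hw : w ∈ W) :
    ∃ c : K, φ w = c • φ w₀ := by
  set f := φ ∘ₗ W.subtype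
  have hker : finrank K (LinearMap.ker f) = finrank K ↥(W ⊓ LinearMap.ker φ) := by
    rw [LinearMap.ker_comp, ← map_comap_subtype]
    exact (equivMapOfInjective _ W.injective_subtype _).finrank_eq
  have hrange : finrank K (LinearMap.range f) = 1 := by
    have hpos : 0 < finrank K (LinearMap.range f) :=
      Module.finrank_pos_iff_exists_ne_zero.mpr
        ⟨⟨f ⟨w₀, hw₀⟩, ⟨_, rfl⟩⟩, fun h0 => hφw₀ (congrArg Subtype.val h0)⟩
    have := LinearMap.finrank_range_add_finrank_ker f
    omega
  obtain ⟨c, hc⟩ := (finrank_eq_one_iff_of_nonzero' (⟨f ⟨w₀, hw₀⟩, ⟨_, rfl⟩⟩ : LinearMap.range f)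
    fun h0 => hφw₀ (congrArg Subtype.val h0)).mp hrange ⟨f ⟨w, hw⟩, ⟨_, rfl⟩⟩
  exact ⟨c, by simpa [f] using congrArg Subtype.val hc.symm⟩

theorem LinearMap.exists_mul_eq_of_forall_dvd {S A : Type*} [CommSemiring S] [CommRing A]
    [IsDomain A] [Algebra S A] (f : A →ₗ[S] A) {a : A} (ha : a ≠ 0) (hdvd : ∀ r, a ∣ f r) :
    ∃ ψ : A →ₗ[S] A, ∀ r, a * ψ r = f r := by
  choose q hq using hdvd
  refine ⟨{ toFun := q, map_add' := fun r r' => ?_, map_smul' := fun s r => ?_ },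
    fun r => (hq r).symm⟩
  · exact mul_left_cancel₀ ha (by rw [← hq, mul_add, ← hq, ← hq, map_add])
  · exact mul_left_cancel₀ ha (by rw [← hq, RingHom.id_apply, mul_smul_comm, ← hq, map_smul])

theorem Module.Basis.isUnit_of_smul_eq_sub {ι R M : Type*} [CommRing R] [AddCommGroup M]
    [Module R M] (b : Basis ι R M) {i i' : ι} (hii' : i ≠ i') {r : R} {m : M}
    (hm : r • m = b i - b i') : IsUnit r := by
  have h := congrArg (fun x => b.repr x i') hm
  simp only [map_smul, Finsupp.smul_apply, smul_eq_mul, map_sub, Basis.repr_self,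
    Finsupp.sub_apply, Finsupp.single_eq_same] at h
  rw [Finsupp.single_eq_of_ne' hii', zero_sub] at h
  exact IsUnit.of_mul_eq_one (-b.repr m i') (by rw [mul_neg, h]; ring)

namespace MvPolynomial

variable {σ R : Type*} [CommRing R]

theorem dvd_sub_self_of_forall_dvd_X {g : MvPolynomial σ R →ₐ[R] MvPolynomial σ R}
    {a : MvPolynomial σ R} (h : ∀ i, a ∣ g (X i) - X i) (p : MvPolynomial σ R) :
    a ∣ g p - p := by
  induction p using MvPolynomial.induction_on with
  | C c => simp [MvPolynomial.algebraMap_eq]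
  | add p q hp hq => simpa [add_sub_add_comm] using dvd_add hp hq
  | mul_X p i hp =>
    have : g (p * X i) - p * X i = g p * (g (X i) - X i) + (g p - p) * X i := by
      rw [map_mul]; ring
    rw [this]
    exact dvd_add (dvd_mul_of_dvd_right (h i) _) (dvd_mul_of_dvd_left hp _)

theorem constantCoeff_eq_zero_of_mem_span_X {p : MvPolynomial σ R}
    (hp : p ∈ Submodule.span R (Set.range X)) : constantCoeff p = 0 := by
  have : Submodule.span R (Set.range (X : σ → MvPolynomial σ R)) ≤
      LinearMap.ker (lcoeff R (0 : σ →₀ ℕ)) := by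
    rw [Submodule.span_le]; rintro _ ⟨i, rfl⟩; simp
  simpa [constantCoeff_eq] using this hp

end MvPolynomial

theorem fixedSubmoduleOf_eq_ker (g : MvPolynomial (Fin n) k ≃ₐ[k] MvPolynomial (Fin n) k) :
    fixedSubmoduleOf g = LinearMap.ker (g.toLinearMap - LinearMap.id) := by
  ext p
  simp [fixedSubmoduleOf, sub_eq_zero]

theorem exists_smul_eq_sub_X_of_finrank_fixed_add_one
    {g : MvPolynomial (Fin n) k ≃ₐ[k] MvPolynomial (Fin n) k}
    (hfix : finrank k ↥(Submodule.span k (Set.range (X : Fin n → MvPolynomial (Fin n) k)) ⊓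
      fixedSubmoduleOf g) + 1 = n)
    {i₀ : Fin n} (hi₀ : g (X i₀) ≠ X i₀) (i : Fin n) :
    ∃ c : k, g (X i) - X i = c • (g (X i₀) - X i₀) := by
  set W := Submodule.span k (Set.range (X : Fin n → MvPolynomial (Fin n) k))
  have : FiniteDimensional k W := .span_of_finite k (Set.finite_range X)
  have hW : finrank k W ≤ n := (finrank_range_le_card X).trans_eq (Fintype.card_fin n)
  rw [fixedSubmoduleOf_eq_ker] at hfix
  exact W.exists_smul_eq_of_finrank_le_finrank_inf_ker_add_one _ (hW.trans hfix.ge)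
    (Submodule.subset_span ⟨i₀, rfl⟩) (sub_ne_zero.mpr hi₀) (Submodule.subset_span ⟨i, rfl⟩)

theorem small_of_auslander_map_bijective_general
    (G : Subgroup (MvPolynomial (Fin n) k ≃ₐ[k] MvPolynomial (Fin n) k))
    (hlin : ∀ g ∈ G, ∀ i : Fin n,
      g (X i) ∈ Submodule.span k (Set.range (X : Fin n → MvPolynomial (Fin n) k)))
    (B : Type*) [Ring B] [Algebra k B]
    (ι : G →* B) (j : MvPolynomial (Fin n) k →ₐ[k] B)
    (bb : @Basis G (MvPolynomial (Fin n) k) B _ _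
      (Module.compHom B j.toRingHom))
    (hbb : ∀ g : G, bb g = ι g)
    (Φ : B →+* Module.End (invariantSubalgebra G) (MvPolynomial (Fin n) k))
    (hΦj : ∀ r r' : MvPolynomial (Fin n) k, Φ (j r) r' = r * r')
    (hΦι : ∀ (g : G) (r' : MvPolynomial (Fin n) k),
      Φ (ι g) r' = (g : MvPolynomial (Fin n) k ≃ₐ[k] MvPolynomial (Fin n) k) r')
    (hbij : Function.Bijective Φ) :
    ∀ g ∈ G, finrank k
        ((Submodule.span k (Set.range (X : Fin n → MvPolynomial (Fin n) k))) ⊓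
          fixedSubmoduleOf g : Submodule k (MvPolynomial (Fin n) k)) + 1 = n →
      g = 1 := by
  intro g hg hfix
  by_contra hg1
  obtain ⟨i₀, hi₀⟩ : ∃ i, g (X i) ≠ X i := by
    by_contra! h
    exact hg1 (AlgEquiv.coe_toAlgHom_injective (algHom_ext h))
  set ℓ := g (X i₀) - X i₀
  have hline (i : Fin n) : ℓ ∣ g (X i) - X i := by
    obtain ⟨c, hc⟩ := exists_smul_eq_sub_X_of_finrank_fixed_add_one hfix hi₀ i
    exact ⟨C c, by rw [hc, smul_eq_C_mul, mul_comm]⟩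
  have hdvd (r : MvPolynomial (Fin n) k) : ℓ ∣ g r - r :=
    dvd_sub_self_of_forall_dvd_X (g := g.toAlgHom) hline r
  let γ : G := ⟨g, hg⟩
  have hγ : γ ≠ 1 := fun h => hg1 (congrArg Subtype.val h)
  obtain ⟨ψ, hψ⟩ := (Φ (ι γ - 1)).exists_mul_eq_of_forall_dvd (sub_ne_zero.mpr hi₀)
    fun r => by simpa [hΦι] using hdvd r
  obtain ⟨b, rfl⟩ := hbij.2 ψ
  have hb : j ℓ * b = ι γ - 1 :=
    hbij.1 <| LinearMap.ext fun r => by rw [map_mul, Module.End.mul_apply, hΦj, hψ]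
  -- the module structure of `bb`, in which `ℓ • b` is `j ℓ * b` by definition
  let _ := Module.compHom B j.toRingHom
  have hunit : IsUnit ℓ :=
    bb.isUnit_of_smul_eq_sub hγ (m := b) (by rw [hbb, hbb, map_one]; exact hb)
  have hcc : constantCoeff ℓ = 0 := by
    rw [map_sub, constantCoeff_eq_zero_of_mem_span_X (hlin g hg i₀),
      constantCoeff_eq_zero_of_mem_span_X (Submodule.subset_span ⟨i₀, rfl⟩), sub_zero]
  exact not_isUnit_zero (hcc ▸ hunit.map constantCoeff)

/-- Let `k` be algebraically closed of characteristic `0`, `dim V = n ≥ 2`,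
and `G` a finite group of linear automorphisms of the polynomial ring `R = k[x₁,…,xₙ]`.
Let `B = R∗G` be the skew group ring (presented by `ι : G → B`, `j : R → B`, with
`ι(g)j(r) = j(g·r)ι(g)` and `{ι(g)}` a basis of `B` as a left `R`-module).  If the natural
map `R∗G → End_{R^G}(R)` is a ring isomorphism, then `G` is small: `G` contains no
pseudo-reflection other than the identity. -/
theorem small_of_auslander_map_bijective
    [IsAlgClosed k] [CharZero k] (hn : 2 ≤ n)
    (G : Subgroup (MvPolynomial (Fin n) k ≃ₐ[k] MvPolynomial (Fin n) k)) [Finite G]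
    (hlin : ∀ g ∈ G, ∀ i : Fin n,
      g (X i) ∈ Submodule.span k (Set.range (X : Fin n → MvPolynomial (Fin n) k)))
    (B : Type*) [Ring B] [Algebra k B]
    (ι : G →* B) (j : MvPolynomial (Fin n) k →ₐ[k] B)
    (hskew : ∀ (g : G) (r : MvPolynomial (Fin n) k),
      ι g * j r = j ((g : MvPolynomial (Fin n) k ≃ₐ[k] MvPolynomial (Fin n) k) r) * ι g)
    (bb : @Basis G (MvPolynomial (Fin n) k) B _ _
      (Module.compHom B j.toRingHom))
    (hbb : ∀ g : G, bb g = ι g)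
    (Φ : B →+* Module.End (invariantSubalgebra G) (MvPolynomial (Fin n) k))
    (hΦj : ∀ r r' : MvPolynomial (Fin n) k, Φ (j r) r' = r * r')
    (hΦι : ∀ (g : G) (r' : MvPolynomial (Fin n) k),
      Φ (ι g) r' = (g : MvPolynomial (Fin n) k ≃ₐ[k] MvPolynomial (Fin n) k) r')
    (hbij : Function.Bijective Φ) :
    ∀ g ∈ G, finrank k
        ((Submodule.span k (Set.range (X : Fin n → MvPolynomial (Fin n) k))) ⊓
          fixedSubmoduleOf g : Submodule k (MvPolynomial (Fin n) k)) + 1 = n →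
      g = 1 :=
  small_of_auslander_map_bijective_general G hlin B ι j bb hbb Φ hΦj hΦι hbij

end
end

section
/- Let A be a down-up algebra A(α, β) over a field k with β ≠ 0, and let a, b be the roots of t² − αt − β = 0. Then Ω₁ = xy − a·yx and Ω₂ = xy − b·yx are normal elements of A, i.e., Ω_i A = A Ω_i. -/
/-!
With `a + b = α` and `ab = -β`, the two defining relations of `A(α,β)` say exactly that
`x Ω = b Ω x` and `Ω y = b y Ω` for `Ω = xy - a·yx`. As `β ≠ 0` forces `b ≠ 0`, each generator
can be moved across `Ω` in both directions, and the elements that can be moved across `Ω` on a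
given side form a subalgebra, which therefore is all of `A`.
-/

noncomputable section

variable (k : Type*) [Field k] (α β : k)

/-- The defining relations of the down-up algebra `A(α,β)`:
`x²y = αxyx + βyx²` and `xy² = αyxy + βy²x`, with `x = ι 0`, `y = ι 1`. -/
inductive DownUpRel : FreeAlgebra k (Fin 2) → FreeAlgebra k (Fin 2) → Prop
  | rel1 : DownUpRel
      (FreeAlgebra.ι k (0 : Fin 2) ^ 2 * FreeAlgebra.ι k (1 : Fin 2))
      (α • (FreeAlgebra.ι k (0 : Fin 2) * FreeAlgebra.ι k (1 : Fin 2) *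
          FreeAlgebra.ι k (0 : Fin 2)) +
        β • (FreeAlgebra.ι k (1 : Fin 2) * FreeAlgebra.ι k (0 : Fin 2) ^ 2))
  | rel2 : DownUpRel
      (FreeAlgebra.ι k (0 : Fin 2) * FreeAlgebra.ι k (1 : Fin 2) ^ 2)
      (α • (FreeAlgebra.ι k (1 : Fin 2) * FreeAlgebra.ι k (0 : Fin 2) *
          FreeAlgebra.ι k (1 : Fin 2)) +
        β • (FreeAlgebra.ι k (1 : Fin 2) ^ 2 * FreeAlgebra.ι k (0 : Fin 2)))

/-- The down-up algebra `A(α,β)`. -/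
def DownUp : Type _ := RingQuot (DownUpRel k α β)

instance : Ring (DownUp k α β) := inferInstanceAs (Ring (RingQuot _))
instance : Algebra k (DownUp k α β) := inferInstanceAs (Algebra k (RingQuot _))

/-- The generator `x` of `A(α,β)`. -/
def duX : DownUp k α β := RingQuot.mkAlgHom k (DownUpRel k α β) (FreeAlgebra.ι k 0)

/-- The generator `y` of `A(α,β)`. -/
def duY : DownUp k α β := RingQuot.mkAlgHom k (DownUpRel k α β) (FreeAlgebra.ι k 1)

/-- An element `Ω` of a ring is normal if `ΩA = AΩ`. -/
def IsNormalElem {A : Type*} [Ring A] (Ω : A) : Prop :=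
  ∀ r : A, (∃ s : A, Ω * r = s * Ω) ∧ (∃ s : A, r * Ω = Ω * s)

section Normalizing

variable {R A : Type*} [CommSemiring R] [Semiring A] [Algebra R A] {s : Set A} {Ω : A}

theorem exists_self_mul_eq_mul_self_of_mem_adjoin (hs : ∀ g ∈ s, ∃ t, Ω * g = t * Ω) {r : A}
    (hr : r ∈ Algebra.adjoin R s) : ∃ t, Ω * r = t * Ω := by
  induction hr using Algebra.adjoin_induction with
  | mem g hg => exact hs g hg
  | algebraMap c => exact ⟨algebraMap R A c, (Algebra.commutes c Ω).symm⟩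
  | add r₁ r₂ _ _ h₁ h₂ =>
    obtain ⟨⟨t₁, ht₁⟩, ⟨t₂, ht₂⟩⟩ := And.intro h₁ h₂
    exact ⟨t₁ + t₂, by rw [mul_add, ht₁, ht₂, add_mul]⟩
  | mul r₁ r₂ _ _ h₁ h₂ =>
    obtain ⟨⟨t₁, ht₁⟩, ⟨t₂, ht₂⟩⟩ := And.intro h₁ h₂
    exact ⟨t₁ * t₂, by rw [← mul_assoc, ht₁, mul_assoc, ht₂, mul_assoc]⟩

theorem exists_mul_self_eq_self_mul_of_mem_adjoin (hs : ∀ g ∈ s, ∃ t, g * Ω = Ω * t) {r : A}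
    (hr : r ∈ Algebra.adjoin R s) : ∃ t, r * Ω = Ω * t := by
  induction hr using Algebra.adjoin_induction with
  | mem g hg => exact hs g hg
  | algebraMap c => exact ⟨algebraMap R A c, Algebra.commutes c Ω⟩
  | add r₁ r₂ _ _ h₁ h₂ =>
    obtain ⟨⟨t₁, ht₁⟩, ⟨t₂, ht₂⟩⟩ := And.intro h₁ h₂
    exact ⟨t₁ + t₂, by rw [add_mul, ht₁, ht₂, mul_add]⟩
  | mul r₁ r₂ _ _ h₁ h₂ =>
    obtain ⟨⟨t₁, ht₁⟩, ⟨t₂, ht₂⟩⟩ := And.intro h₁ h₂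
    exact ⟨t₁ * t₂, by rw [mul_assoc, ht₂, ← mul_assoc, ht₁, mul_assoc]⟩

end Normalizing

theorem isNormalElem_of_adjoin_eq_top {R A : Type*} [CommSemiring R] [Ring A] [Algebra R A]
    {s : Set A} (hs : Algebra.adjoin R s = ⊤) {Ω : A}
    (hleft : ∀ g ∈ s, ∃ t, Ω * g = t * Ω) (hright : ∀ g ∈ s, ∃ t, g * Ω = Ω * t) :
    IsNormalElem Ω := fun _ =>
  ⟨exists_self_mul_eq_mul_self_of_mem_adjoin hleft (hs ▸ Algebra.mem_top),
    exists_mul_self_eq_self_mul_of_mem_adjoin hright (hs ▸ Algebra.mem_top)⟩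

def qCommutator {R A : Type*} [Ring A] [SMul R A] (q : R) (x y : A) : A :=
  x * y - q • (y * x)

section Commutation

variable {R A : Type*} [CommRing R] [Ring A] [Algebra R A] {X Y : A} {α β a b : R}

theorem mul_qCommutator_eq_smul_qCommutator_mul
    (h : X ^ 2 * Y = α • (X * Y * X) + β • (Y * X ^ 2)) (hsum : a + b = α) (hprod : a * b = -β) :
    X * qCommutator a X Y = b • (qCommutator a X Y * X) := by
  obtain rfl : β = -(a * b) := by rw [hprod, neg_neg]
  subst hsum
  have key : X * qCommutator a X Y - b • (qCommutator a X Y * X) =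
      X ^ 2 * Y - ((a + b) • (X * Y * X) + (-(a * b)) • (Y * X ^ 2)) := by
    simp only [qCommutator, mul_sub, sub_mul, mul_smul_comm, smul_mul_assoc, mul_assoc, sq]
    module
  rwa [← h, sub_self, sub_eq_zero] at key

theorem qCommutator_mul_eq_smul_mul_qCommutator
    (h : X * Y ^ 2 = α • (Y * X * Y) + β • (Y ^ 2 * X)) (hsum : a + b = α) (hprod : a * b = -β) :
    qCommutator a X Y * Y = b • (Y * qCommutator a X Y) := by
  obtain rfl : β = -(a * b) := by rw [hprod, neg_neg]
  subst hsum
  have key : qCommutator a X Y * Y - b • (Y * qCommutator a X Y) =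
      X * Y ^ 2 - ((a + b) • (Y * X * Y) + (-(a * b)) • (Y ^ 2 * X)) := by
    simp only [qCommutator, mul_sub, sub_mul, mul_smul_comm, smul_mul_assoc, mul_assoc, sq]
    module
  rwa [← h, sub_self, sub_eq_zero] at key

end Commutation

theorem duX_sq_mul_duY : duX k α β ^ 2 * duY k α β =
    α • (duX k α β * duY k α β * duX k α β) + β • (duY k α β * duX k α β ^ 2) := by
  have h := RingQuot.mkAlgHom_rel k (DownUpRel.rel1 (k := k) (α := α) (β := β))
  simp only [map_mul, map_pow, map_add, map_smul] at h
  exact h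

theorem duX_mul_duY_sq : duX k α β * duY k α β ^ 2 =
    α • (duY k α β * duX k α β * duY k α β) + β • (duY k α β ^ 2 * duX k α β) := by
  have h := RingQuot.mkAlgHom_rel k (DownUpRel.rel2 (k := k) (α := α) (β := β))
  simp only [map_mul, map_pow, map_add, map_smul] at h
  exact h

theorem adjoin_duX_duY : Algebra.adjoin k {duX k α β, duY k α β} = ⊤ := by
  let π : FreeAlgebra k (Fin 2) →ₐ[k] DownUp k α β := RingQuot.mkAlgHom k (DownUpRel k α β)
  have hgen : {duX k α β, duY k α β} = π '' Set.range (FreeAlgebra.ι k) := by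
    ext r
    simp only [Set.mem_insert_iff, Set.mem_singleton_iff, ← Set.range_comp, Set.mem_range,
      Fin.exists_fin_two, Function.comp_apply, eq_comm]
    rfl
  rw [hgen, Algebra.adjoin_image, FreeAlgebra.adjoin_range_ι, Algebra.map_top,
    AlgHom.range_eq_top]
  exact RingQuot.mkAlgHom_surjective k _

theorem isNormalElem_qCommutator_duX_duY (hβ : β ≠ 0) {a b : k} (hsum : a + b = α)
    (hprod : a * b = -β) : IsNormalElem (qCommutator a (duX k α β) (duY k α β)) := by
  have hb : b ≠ 0 := right_ne_zero_of_mul (hprod ▸ neg_ne_zero.mpr hβ)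
  have hx := mul_qCommutator_eq_smul_qCommutator_mul (duX_sq_mul_duY k α β) hsum hprod
  have hy := qCommutator_mul_eq_smul_mul_qCommutator (duX_mul_duY_sq k α β) hsum hprod
  refine isNormalElem_of_adjoin_eq_top (adjoin_duX_duY k α β) ?_ ?_ <;> rintro g (rfl | rfl)
  · exact ⟨b⁻¹ • duX k α β, by rw [smul_mul_assoc, hx, inv_smul_smul₀ hb]⟩
  · exact ⟨b • duY k α β, by rw [smul_mul_assoc, ← hy]⟩
  · exact ⟨b • duX k α β, by rw [mul_smul_comm, ← hx]⟩
  · exact ⟨b⁻¹ • duY k α β, by rw [mul_smul_comm, hy, inv_smul_smul₀ hb]⟩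

/-- Let `A = A(α,β)` be a down-up algebra with `β ≠ 0` and let `a, b` be the roots of
`t² - αt - β = 0` (i.e. `a + b = α` and `a * b = -β`).  Then `Ω₁ = xy - a·yx` and
`Ω₂ = xy - b·yx` are normal elements of `A`. -/
theorem downUp_omega_isNormal (hβ : β ≠ 0) (a b : k)
    (hsum : a + b = α) (hprod : a * b = -β) :
    IsNormalElem (duX k α β * duY k α β - a • (duY k α β * duX k α β)) ∧
      IsNormalElem (duX k α β * duY k α β - b • (duY k α β * duX k α β)) :=
  ⟨isNormalElem_qCommutator_duX_duY k α β hβ hsum hprod,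
    isNormalElem_qCommutator_duX_duY k α β hβ ((add_comm b a).trans hsum)
      ((mul_comm b a).trans hprod)⟩

end
end

section
/- Let H be a Hopf algebra acting on an (ℕ × Γ)-graded algebra A preserving the grading, and let τ be a twisting system of A commuting with the H-action, i.e., h·τ_γ(x) = τ_γ(h·x) for all h ∈ H, γ ∈ Γ, x ∈ A. Then the H-action on the underlying space of A makes the twisted algebra A^τ a left H-module algebra. -/
noncomputable section

open DirectSum TensorProduct

variable {k A Γ H : Type*} [Field k] [AddGroup Γ] [DecidableEq Γ]
  [Ring A] [Algebra k A] [Ring H] [HopfAlgebra k H]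

variable (𝒜 : ℕ × Γ → Submodule k A) [GradedAlgebra 𝒜] (τ : Γ → (A ≃ₐ[k] A))

/-- The twisted multiplication `x ∗ y`: for `x` homogeneous of degree `(n, γ)`,
`x ∗ y = x · τ_γ(y)`, extended additively in `x` via the grading decomposition. -/
def twistMul (x y : A) : A :=
  DFinsupp.sumAddHom
    (fun d : ℕ × Γ =>
      (AddMonoidHom.mulRight ((τ d.2) y)).comp ((𝒜 d).subtype.toAddMonoidHom))
    (DirectSum.decompose 𝒜 x)

theorem twistMul_zero_left (y : A) : twistMul 𝒜 τ 0 y = 0 := by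
  simp [twistMul]

theorem twistMul_add_left (x x' y : A) :
    twistMul 𝒜 τ (x + x') y = twistMul 𝒜 τ x y + twistMul 𝒜 τ x' y := by
  simp only [twistMul, DirectSum.decompose_add, map_add]

theorem twistMul_of_mem {d : ℕ × Γ} {x : A} (hx : x ∈ 𝒜 d) (y : A) :
    twistMul 𝒜 τ x y = x * τ d.2 y := by
  rw [twistMul, DirectSum.decompose_of_mem 𝒜 hx]
  exact DFinsupp.sumAddHom_single _ _ _

/-- Both sides are additive in `x`, so it suffices to treat homogeneous `x`, where the twisted
product is an ordinary product and the action preserves the degree that selects the twist. -/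
theorem twisted_algebra_is_module_algebra
    (act : H →ₗ[k] A →ₗ[k] A)
    -- the action preserves the grading
    (hdeg : ∀ (h : H) (d : ℕ × Γ), ∀ a ∈ 𝒜 d, act h a ∈ 𝒜 d)
    -- `A` is an `H`-module algebra for the original product:
    -- `h·(xy) = Σ (h₁·x)(h₂·y)`
    (hma : ∀ (h : H) (x y : A) {ι : Type} (s : Finset ι) (a b : ι → H),
      Coalgebra.comul (R := k) h = ∑ i ∈ s, a i ⊗ₜ[k] b i →
        act h (x * y) = ∑ i ∈ s, act (a i) x * act (b i) y)
    -- the `H`-action commutes with the twisting system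
    (hcomm : ∀ (h : H) (γ : Γ) (x : A), act h ((τ γ) x) = (τ γ) (act h x)) :
    ∀ (h : H) (x y : A) {ι : Type} (s : Finset ι) (a b : ι → H),
      Coalgebra.comul (R := k) h = ∑ i ∈ s, a i ⊗ₜ[k] b i →
        act h (twistMul 𝒜 τ x y) =
          ∑ i ∈ s, twistMul 𝒜 τ (act (a i) x) (act (b i) y) := by
  intro h x y ι s a b hcomul
  induction x using DirectSum.Decomposition.inductionOn 𝒜 with
  | zero => simp [twistMul_zero_left]
  | @homogeneous d x =>
    rw [twistMul_of_mem 𝒜 τ x.2, hma h _ _ s a b hcomul]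
    refine Finset.sum_congr rfl fun i _ => ?_
    rw [twistMul_of_mem 𝒜 τ (hdeg _ d x x.2), hcomm]
  | add x x' hx hx' =>
    simp only [twistMul_add_left, map_add, hx, hx', Finset.sum_add_distrib]

end
end

section
/- Let H be a semisimple Hopf algebra with normalized integral ∫ acting on an algebra R, and e = 1 # ∫ ∈ B := R # H. Then the corner ring e B e is isomorphic as a k-algebra to the fixed subring R^H = {r ∈ R : h·r = ε(h)r for all h ∈ H}. -/
noncomputable section

open TensorProduct

variable {k A H : Type*} [Field k] [Ring A] [Algebra k A] [Ring H] [HopfAlgebra k H]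

/-- The action `H ⊗ A → A` as a linear map. -/
def actT (act : H →ₗ[k] A →ₗ[k] A) : H ⊗[k] A →ₗ[k] A := TensorProduct.lift act

/-- The map `h ⊗ (x' ⊗ h') ↦ Σ (h₁·x') ⊗ (h₂h')`. -/
def smashHalf (act : H →ₗ[k] A →ₗ[k] A) : H ⊗[k] (A ⊗[k] H) →ₗ[k] A ⊗[k] H :=
  (TensorProduct.map (actT act) (LinearMap.mul' k H)) ∘ₗ
    (TensorProduct.tensorTensorTensorComm k H H A H).toLinearMap ∘ₗ
    (TensorProduct.map (Coalgebra.comul (R := k)) LinearMap.id)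

/-- The multiplication of the smash product `A # H`:
`(x # h)(x' # h') = Σ x(h₁·x') # h₂h'`. -/
def smashMul (act : H →ₗ[k] A →ₗ[k] A) :
    (A ⊗[k] H) →ₗ[k] (A ⊗[k] H) →ₗ[k] A ⊗[k] H :=
  TensorProduct.curry
    ((TensorProduct.map (LinearMap.mul' k A) LinearMap.id) ∘ₗ
      (TensorProduct.assoc k A A H).symm.toLinearMap ∘ₗ
      (TensorProduct.map LinearMap.id (smashHalf act)) ∘ₗ
      (TensorProduct.assoc k A H (A ⊗[k] H)).toLinearMap)

/-- The corner `e·(A#H)·e` of the smash product at `e = 1 # ∫`, as a `k`-submodule. -/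
def smashCorner (act : H →ₗ[k] A →ₗ[k] A) (intg : H) : Submodule k (A ⊗[k] H) :=
  LinearMap.range
    ((smashMul act ((1 : A) ⊗ₜ[k] intg)) ∘ₗ ((smashMul act).flip ((1 : A) ⊗ₜ[k] intg)))

/-- The fixed subring `R^H = {r | h·r = ε(h)r}`, as a `k`-submodule of `R`. -/
def hInvariants (act : H →ₗ[k] A →ₗ[k] A) : Submodule k A where
  carrier := {x | ∀ h : H, act h x = Coalgebra.counit (R := k) h • x}
  add_mem' := fun hx hy h => by rw [map_add, hx h, hy h, smul_add]
  zero_mem' := fun h => by rw [map_zero, smul_zero]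
  smul_mem' := fun c x hx h => by rw [map_smul, hx h, smul_comm]

/-
The corner `e(R#H)e` consists exactly of the elements `(∫·r) # ∫`: multiplying by
`e = 1 # ∫` on the right collapses `r # h` to `ε(h) r # ∫` because `∫` is a left integral, and
multiplying by `e` on the left then applies `∫` to the first factor. Since `ε(∫) = 1`, the image
of `∫·` is precisely `R^H`, and `x # ∫ ↦ x` is injective, so the corner is a copy of `R^H`.
In the corner `(x # ∫)(y # ∫) = x(∫·y) # ∫ = xy # ∫`, which makes this copy multiplicative.
-/

lemma TensorProduct.exists_fin {R M N : Type*} [CommSemiring R] [AddCommMonoid M]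
    [Module R M] [AddCommMonoid N] [Module R N] (x : M ⊗[R] N) :
    ∃ (n : ℕ) (a : Fin n → M) (b : Fin n → N), x = ∑ i, a i ⊗ₜ[R] b i := by
  obtain ⟨s, rfl⟩ := TensorProduct.exists_finset x
  refine ⟨s.card, fun i => (s.equivFin.symm i).1.1, fun i => (s.equivFin.symm i).1.2, ?_⟩
  rw [← Finset.sum_coe_sort s, ← Equiv.sum_comp s.equivFin.symm]

lemma Coalgebra.sum_counit_right_smul {R C ι : Type*} [CommSemiring R] [AddCommMonoid C]
    [Module R C] [Coalgebra R C] {c : C} (𝓡 : Coalgebra.Repr R c ι) :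
    ∑ i ∈ 𝓡.index, Coalgebra.counit (R := R) (𝓡.right i) • 𝓡.left i = c := by
  simpa only [map_sum, _root_.TensorProduct.rid_tmul, one_smul] using
    congr_arg (_root_.TensorProduct.rid R C) (Coalgebra.sum_tmul_counit_eq 𝓡)

def smashProj : A ⊗[k] H →ₗ[k] A :=
  (TensorProduct.rid k A).toLinearMap ∘ₗ LinearMap.lTensor A (Coalgebra.counit (R := k))

@[simp]
lemma smashProj_tmul (x : A) (h : H) :
    smashProj (x ⊗ₜ[k] h) = Coalgebra.counit (R := k) h • x := by
  simp [smashProj]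

section SmashProduct

variable (act : H →ₗ[k] A →ₗ[k] A) {intg : H}

lemma smashMul_tmul_tmul {ι : Type*} (x y : A) (h h' : H) (𝓡 : Coalgebra.Repr k h ι) :
    smashMul act (x ⊗ₜ[k] h) (y ⊗ₜ[k] h') =
      ∑ i ∈ 𝓡.index, (x * act (𝓡.left i) y) ⊗ₜ[k] (𝓡.right i * h') := by
  simp only [smashMul, smashHalf, actT, TensorProduct.curry_apply, LinearMap.coe_comp,
    Function.comp_apply, LinearEquiv.coe_coe, TensorProduct.assoc_tmul, TensorProduct.map_tmul,
    LinearMap.id_coe, id_eq, ← 𝓡.eq, TensorProduct.sum_tmul, map_sum,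
    TensorProduct.tensorTensorTensorComm_tmul, TensorProduct.assoc_symm_tmul,
    LinearMap.mul'_apply, TensorProduct.lift.tmul, TensorProduct.tmul_sum]

lemma smashMul_tmul_integral (hleft : ∀ h : H, h * intg = Coalgebra.counit (R := k) h • intg)
    (x y : A) (h : H) :
    smashMul act (x ⊗ₜ[k] h) (y ⊗ₜ[k] intg) = (x * act h y) ⊗ₜ[k] intg := by
  let 𝓡 := Coalgebra.Repr.arbitrary k h
  calc smashMul act (x ⊗ₜ[k] h) (y ⊗ₜ[k] intg)
      = ∑ i ∈ 𝓡.index, (x * act (Coalgebra.counit (R := k) (𝓡.right i) • 𝓡.left i) y)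
          ⊗ₜ[k] intg := by
        rw [smashMul_tmul_tmul act x y h intg 𝓡]
        refine Finset.sum_congr rfl fun i _ => ?_
        rw [hleft, map_smul, LinearMap.smul_apply, mul_smul_comm, TensorProduct.tmul_smul,
          TensorProduct.smul_tmul']
    _ = (x * act h y) ⊗ₜ[k] intg := by
        rw [← TensorProduct.sum_tmul, ← Finset.mul_sum, ← LinearMap.sum_apply, ← map_sum,
          Coalgebra.sum_counit_right_smul]

lemma act_integral_mem_hInvariants
    (hactmul : ∀ (h h' : H) (x : A), act (h * h') x = act h (act h' x))
    (hleft : ∀ h : H, h * intg = Coalgebra.counit (R := k) h • intg) (x : A) :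
    act intg x ∈ hInvariants act := fun h => by
  rw [← hactmul, hleft, map_smul, LinearMap.smul_apply]

lemma range_act_integral
    (hactmul : ∀ (h h' : H) (x : A), act (h * h') x = act h (act h' x))
    (hleft : ∀ h : H, h * intg = Coalgebra.counit (R := k) h • intg)
    (hnorm : Coalgebra.counit (R := k) intg = 1) :
    LinearMap.range (act intg) = hInvariants act := by
  refine le_antisymm ?_ fun x hx => ⟨x, by rw [hx intg, hnorm, one_smul]⟩
  rintro _ ⟨x, rfl⟩
  exact act_integral_mem_hInvariants act hactmul hleft x

lemma mul_mem_hInvariants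
    (hma : ∀ (h : H) (x y : A) {ι : Type} (s : Finset ι) (a b : ι → H),
      Coalgebra.comul (R := k) h = ∑ i ∈ s, a i ⊗ₜ[k] b i →
        act h (x * y) = ∑ i ∈ s, act (a i) x * act (b i) y)
    {x y : A} (hx : x ∈ hInvariants act) (hy : y ∈ hInvariants act) :
    x * y ∈ hInvariants act := fun h => by
  obtain ⟨n, a, b, hab⟩ := TensorProduct.exists_fin (Coalgebra.comul (R := k) h)
  let 𝓡 : Coalgebra.Repr k h (Fin n) := ⟨Finset.univ, a, b, hab.symm⟩
  calc act h (x * y)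
      = ∑ i, x * act (Coalgebra.counit (R := k) (a i) • b i) y := by
        rw [hma h x y _ a b hab]
        refine Finset.sum_congr rfl fun i _ => ?_
        rw [hx, hy, map_smul, LinearMap.smul_apply, hy]
        simp only [smul_mul_assoc, mul_smul_comm]
        exact smul_comm _ _ _
    _ = x * act h y := by
        rw [← Finset.mul_sum, ← LinearMap.sum_apply, ← map_sum,
          Coalgebra.sum_counit_smul 𝓡]
    _ = Coalgebra.counit (R := k) h • (x * y) := by rw [hy, mul_smul_comm]

variable (k intg) in
def tmulIntegral : A →ₗ[k] A ⊗[k] H := (TensorProduct.mk k A H).flip intg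

lemma smashProj_tmulIntegral (hnorm : Coalgebra.counit (R := k) intg = 1) (x : A) :
    smashProj (tmulIntegral k intg x) = x := by
  simp [tmulIntegral, hnorm]

lemma tmulIntegral_injective (hnorm : Coalgebra.counit (R := k) intg = 1) :
    Function.Injective (tmulIntegral k (A := A) intg) :=
  Function.LeftInverse.injective (smashProj_tmulIntegral hnorm)

lemma smashMul_tmulIntegral_of_mem
    (hleft : ∀ h : H, h * intg = Coalgebra.counit (R := k) h • intg)
    (hnorm : Coalgebra.counit (R := k) intg = 1) {x y : A} (hy : y ∈ hInvariants act) :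
    smashMul act (tmulIntegral k intg x) (tmulIntegral k intg y) =
      tmulIntegral k intg (x * y) := by
  simp only [tmulIntegral, LinearMap.flip_apply, TensorProduct.mk_apply]
  rw [smashMul_tmul_integral act hleft, hy, hnorm, one_smul]

lemma smashCorner_eq_map_hInvariants
    (hactmul : ∀ (h h' : H) (x : A), act (h * h') x = act h (act h' x))
    (hunit : ∀ h : H, act h 1 = Coalgebra.counit (R := k) h • (1 : A))
    (hleft : ∀ h : H, h * intg = Coalgebra.counit (R := k) h • intg)
    (hnorm : Coalgebra.counit (R := k) intg = 1) :
    smashCorner act intg = (hInvariants act).map (tmulIntegral k intg) := by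
  have sandwich : (smashMul act ((1 : A) ⊗ₜ[k] intg)) ∘ₗ
      (smashMul act).flip ((1 : A) ⊗ₜ[k] intg) =
        tmulIntegral k intg ∘ₗ act intg ∘ₗ smashProj := by
    refine TensorProduct.ext' fun x h => ?_
    simp only [LinearMap.coe_comp, Function.comp_apply, LinearMap.flip_apply, smashProj_tmul,
      smashMul_tmul_integral act hleft, hunit, mul_smul_comm, mul_one, one_mul]
    rfl
  have smashProj_surjective : Function.Surjective (smashProj (k := k) (A := A) (H := H)) :=
    fun x => ⟨x ⊗ₜ[k] 1, by rw [smashProj_tmul, Bialgebra.counit_one, one_smul]⟩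
  rw [smashCorner, sandwich, LinearMap.range_comp, LinearMap.range_comp,
    LinearMap.range_eq_top.mpr smashProj_surjective, Submodule.map_top,
    range_act_integral act hactmul hleft hnorm]

end SmashProduct

theorem smash_corner_iso_invariants_general
    (act : H →ₗ[k] A →ₗ[k] A)
    (hactmul : ∀ (h h' : H) (x : A), act (h * h') x = act h (act h' x))
    (hma : ∀ (h : H) (x y : A) {ι : Type} (s : Finset ι) (a b : ι → H),
      Coalgebra.comul (R := k) h = ∑ i ∈ s, a i ⊗ₜ[k] b i →
        act h (x * y) = ∑ i ∈ s, act (a i) x * act (b i) y)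
    (hunit : ∀ h : H, act h 1 = Coalgebra.counit (R := k) h • (1 : A))
    (intg : H)
    (hint : ∀ h : H, h * intg = Coalgebra.counit (R := k) h • intg ∧
      intg * h = Coalgebra.counit (R := k) h • intg)
    (hnorm : Coalgebra.counit (R := k) intg = 1) :
    ∃ (Φ : smashCorner act intg ≃ₗ[k] hInvariants act)
      (hmem : ∀ u v : A ⊗[k] H, u ∈ smashCorner act intg → v ∈ smashCorner act intg →
        smashMul act u v ∈ smashCorner act intg)
      (he : (1 : A) ⊗ₜ[k] intg ∈ smashCorner act intg),
        (∀ (u v : A ⊗[k] H) (hu : u ∈ smashCorner act intg)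
            (hv : v ∈ smashCorner act intg),
          (Φ ⟨smashMul act u v, hmem u v hu hv⟩ : A) = (Φ ⟨u, hu⟩ : A) * (Φ ⟨v, hv⟩ : A)) ∧
        (Φ ⟨(1 : A) ⊗ₜ[k] intg, he⟩ : A) = 1 := by
  have hleft h := (hint h).1
  have hcorner := smashCorner_eq_map_hInvariants act hactmul hunit hleft hnorm
  have hinj := tmulIntegral_injective (A := A) hnorm
  let Φ := (LinearEquiv.ofEq _ _ hcorner).trans
    (Submodule.equivMapOfInjective _ hinj (hInvariants act)).symm
  have tmulIntegral_Φ (u) (hu : u ∈ smashCorner act intg) :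
      tmulIntegral k intg (Φ ⟨u, hu⟩ : A) = u :=
    congr_arg Subtype.val ((Submodule.equivMapOfInjective _ hinj _).apply_symm_apply ⟨u, _⟩)
  have hmem u v (hu : u ∈ smashCorner act intg) (hv : v ∈ smashCorner act intg) :
      smashMul act u v ∈ smashCorner act intg := by
    rw [← tmulIntegral_Φ u hu, ← tmulIntegral_Φ v hv,
      smashMul_tmulIntegral_of_mem act hleft hnorm (Φ _).2]
    exact hcorner.ge ⟨_, mul_mem_hInvariants act hma (Φ _).2 (Φ _).2, rfl⟩
  have he : (1 : A) ⊗ₜ[k] intg ∈ smashCorner act intg := hcorner.ge ⟨1, hunit, rfl⟩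
  refine ⟨Φ, hmem, he, fun u v hu hv => hinj ?_, hinj ?_⟩
  · rw [tmulIntegral_Φ, ← smashMul_tmulIntegral_of_mem act hleft hnorm (Φ _).2,
      tmulIntegral_Φ, tmulIntegral_Φ]
  · rw [tmulIntegral_Φ]; rfl

/-- Let `H` be a semisimple Hopf algebra with normalized two-sided
integral `∫` acting on an algebra `R`, and `e = 1 # ∫ ∈ B = R # H`.  Then the corner ring
`eBe` is isomorphic as a `k`-algebra to the fixed subring `R^H`: there is a `k`-linear
equivalence which is multiplicative and sends `e` to `1`. -/
theorem smash_corner_iso_invariants [FiniteDimensional k H]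
    (act : H →ₗ[k] A →ₗ[k] A)
    (hact1 : ∀ x : A, act 1 x = x)
    (hactmul : ∀ (h h' : H) (x : A), act (h * h') x = act h (act h' x))
    (hma : ∀ (h : H) (x y : A) {ι : Type} (s : Finset ι) (a b : ι → H),
      Coalgebra.comul (R := k) h = ∑ i ∈ s, a i ⊗ₜ[k] b i →
        act h (x * y) = ∑ i ∈ s, act (a i) x * act (b i) y)
    (hunit : ∀ h : H, act h 1 = Coalgebra.counit (R := k) h • (1 : A))
    (intg : H)
    (hint : ∀ h : H, h * intg = Coalgebra.counit (R := k) h • intg ∧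
      intg * h = Coalgebra.counit (R := k) h • intg)
    (hnorm : Coalgebra.counit (R := k) intg = 1) :
    ∃ (Φ : smashCorner act intg ≃ₗ[k] hInvariants act)
      (hmem : ∀ u v : A ⊗[k] H, u ∈ smashCorner act intg → v ∈ smashCorner act intg →
        smashMul act u v ∈ smashCorner act intg)
      (he : (1 : A) ⊗ₜ[k] intg ∈ smashCorner act intg),
        (∀ (u v : A ⊗[k] H) (hu : u ∈ smashCorner act intg)
            (hv : v ∈ smashCorner act intg),
          (Φ ⟨smashMul act u v, hmem u v hu hv⟩ : A) = (Φ ⟨u, hu⟩ : A) * (Φ ⟨v, hv⟩ : A)) ∧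
        (Φ ⟨(1 : A) ⊗ₜ[k] intg, he⟩ : A) = 1 :=
  smash_corner_iso_invariants_general act hactmul hma hunit intg hint hnorm
end
end
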